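/- arXiv:1703.04018 — 4 statements merged into one kernel-verified Lean document; each statement's English description precedes it below -/
import Mathlib

section
/- Let X(u,v) = (e^{-a}(v³/6 - u²v/2) + cosh(a)v + u²/2 - v²/2 - 1, u - e^{-a}uv, e^{-a}(v³/6 - u²v/2) + sinh(a)v + u²/2 - v²/2) and let P_θ = [[1 - θ²/2, θ, θ²/2], [-θ, 1, θ], [-θ²/2, θ, 1 + θ²/2]]. Then P_θ · X(u,v) = X(u+θ, v) for all u, v, θ ∈ ℝ. -/
open Matrix

/-- The parametrization of the parabolic catenoid. -/
noncomputable def parabolicCatenoid (a u v : ℝ) : Fin 3 → ℝ :=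
  ![Real.exp (-a) * (v ^ 3 / 6 - u ^ 2 * v / 2) + Real.cosh a * v
      + u ^ 2 / 2 - v ^ 2 / 2 - 1,
    u - Real.exp (-a) * u * v,
    Real.exp (-a) * (v ^ 3 / 6 - u ^ 2 * v / 2) + Real.sinh a * v
      + u ^ 2 / 2 - v ^ 2 / 2]

/-- Rotational invariance of the parabolic catenoid: the parabolic rotation
`P_θ` with lightlike axis `(1,0,1)` maps `X(u,v)` to `X(u+θ,v)`. -/
theorem parabolic_catenoid_rotational (a θ u v : ℝ) :
    (Matrix.of ![![1 - θ ^ 2 / 2, θ, θ ^ 2 / 2],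
                 ![-θ, 1, θ],
                 ![-θ ^ 2 / 2, θ, 1 + θ ^ 2 / 2]]).mulVec
      (parabolicCatenoid a u v)
    = parabolicCatenoid a (u + θ) v := by
  funext i
  fin_cases i <;>
    simp [parabolicCatenoid, mulVec, dotProduct, Fin.sum_univ_three, Real.cosh_eq,
      Real.sinh_eq] <;> ring
end

section
/- The holomorphic curve φ(z) = (i(2z² + 2iz - 1)/2, (2iz - 1)/2, z² + iz) satisfies φ₁² + φ₂² + φ₃² = 0, and the associated conformal metric factor (|z|² + |z + 2i|²)/2 is bounded below by |z|²/2; consequently every divergent path γ : [0, ∞) → ℂ with |γ(t)| → ∞ has infinite length ∫ (|γ(t)|² + |γ(t) + 2i|²)/2 · |γ'(t)| dt = ∞. -/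
open Complex MeasureTheory Filter Set

/-!
The conformal factor is at least `|z|²/2`, hence bounded below by a positive constant far out,
so the length of a divergent path dominates a multiple of the Euclidean length of a tail of it.
That is infinite: by the fundamental theorem of calculus it bounds `‖γ b - γ a‖`, which is
unbounded.
-/

section PathLength

variable {E : Type*} [NormedAddCommGroup E] [NormedSpace ℝ E] [CompleteSpace E]
  {γ : ℝ → E}

theorem enorm_sub_le_lintegral_enorm_deriv (hγ : Differentiable ℝ γ) {a b : ℝ} (hab : a ≤ b) :
    ‖γ b - γ a‖ₑ ≤ ∫⁻ t in Ioc a b, ‖deriv γ t‖ₑ := by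
  rcases eq_top_or_lt_top (∫⁻ t in Ioc a b, ‖deriv γ t‖ₑ) with htop | hfin
  · simp [htop]
  have hint : IntervalIntegrable (deriv γ) volume a b :=
    (intervalIntegrable_iff_integrableOn_Ioc_of_le hab).2 ⟨aestronglyMeasurable_deriv γ _, hfin⟩
  rw [← intervalIntegral.integral_eq_sub_of_hasDerivAt (fun t _ => (hγ t).hasDerivAt) hint,
    intervalIntegral.integral_of_le hab]
  exact enorm_integral_le_lintegral_enorm _

theorem lintegral_enorm_deriv_Ici_eq_top (hγ : Differentiable ℝ γ)
    (hdiv : Tendsto (fun t => ‖γ t‖) atTop atTop) (a : ℝ) :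
    ∫⁻ t in Ici a, ‖deriv γ t‖ₑ = ⊤ := by
  have hdist : Tendsto (fun b => ‖γ b - γ a‖ₑ) atTop (nhds ⊤) := by
    have hsub : Tendsto (fun b => ‖γ b‖ - ‖γ a‖) atTop atTop :=
      tendsto_atTop_add_const_right _ _ hdiv
    simpa only [Function.comp_def, ofReal_norm] using ENNReal.tendsto_ofReal_atTop.comp
      (tendsto_atTop_mono (fun b => norm_sub_norm_le (γ b) (γ a)) hsub)
  refine top_le_iff.1 (le_of_tendsto hdist ?_)
  filter_upwards [eventually_ge_atTop a] with b hab
  exact (enorm_sub_le_lintegral_enorm_deriv hγ hab).trans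
    (lintegral_mono_set fun t ht => ht.1.le)

theorem lintegral_conformal_length_eq_top (hγ : Differentiable ℝ γ)
    (hdiv : Tendsto (fun t => ‖γ t‖) atTop atTop) {ρ : E → ℝ} {R c : ℝ} (hc : 0 < c)
    (hρ : ∀ w, R ≤ ‖w‖ → c ≤ ρ w) (a : ℝ) :
    ∫⁻ t in Ici a, ENNReal.ofReal (ρ (γ t) * ‖deriv γ t‖) = ⊤ := by
  obtain ⟨T, hT⟩ := eventually_atTop.1 (hdiv.eventually_ge_atTop R)
  have htail : ∫⁻ t in Ici (max a T), ENNReal.ofReal c * ‖deriv γ t‖ₑ = ⊤ := by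
    rw [lintegral_const_mul' _ _ ENNReal.ofReal_ne_top,
      lintegral_enorm_deriv_Ici_eq_top hγ hdiv, ENNReal.mul_top (by simpa using hc)]
  refine top_le_iff.1 (htail ▸ ?_)
  calc ∫⁻ t in Ici (max a T), ENNReal.ofReal c * ‖deriv γ t‖ₑ
      ≤ ∫⁻ t in Ici (max a T), ENNReal.ofReal (ρ (γ t) * ‖deriv γ t‖) := by
        refine setLIntegral_mono' measurableSet_Ici fun t ht => ?_
        rw [← ofReal_norm, ← ENNReal.ofReal_mul hc.le]
        gcongr
        exact hρ _ (hT t (le_of_max_le_right ht))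
    _ ≤ ∫⁻ t in Ici a, ENNReal.ofReal (ρ (γ t) * ‖deriv γ t‖) :=
        lintegral_mono_set (Ici_subset_Ici.2 (le_max_left a T))

end PathLength

/-- The isotropic curve `φ(z) = (i(2z² + 2iz - 1)/2, (2iz - 1)/2, z² + iz)`
of the dual surface of the parabolic catenoid satisfies the Euclidean isotropy
relation, its conformal metric factor `(|z|² + |z + 2i|²)/2` is bounded below
by `|z|²/2`, and consequently every divergent path has infinite length, so the
surface is complete. -/
theorem dual_parabolic_catenoid_complete :
    (∀ z : ℂ,
      (I * (2 * z ^ 2 + 2 * I * z - 1) / 2) ^ 2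
        + ((2 * I * z - 1) / 2) ^ 2 + (z ^ 2 + I * z) ^ 2 = 0) ∧
    (∀ z : ℂ, ‖z‖ ^ 2 / 2
        ≤ (‖z‖ ^ 2 + ‖z + 2 * I‖ ^ 2) / 2) ∧
    (∀ γ : ℝ → ℂ, Differentiable ℝ γ →
      Filter.Tendsto (fun t => ‖γ t‖) Filter.atTop Filter.atTop →
      ∫⁻ t in Set.Ici (0 : ℝ),
        ENNReal.ofReal
          ((‖γ t‖ ^ 2 + ‖γ t + 2 * I‖ ^ 2) / 2
            * ‖deriv γ t‖) = ⊤) := by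
  have hfactor : ∀ z : ℂ, ‖z‖ ^ 2 / 2 ≤ (‖z‖ ^ 2 + ‖z + 2 * I‖ ^ 2) / 2 := fun z => by
    have := sq_nonneg ‖z + 2 * I‖
    linarith
  refine ⟨fun z => ?_, hfactor, fun γ hγ hdiv => ?_⟩
  · linear_combination (z ^ 4 + I ^ 2 * z ^ 2 + 2 * I * z ^ 3 - I * z + 1 / 4) * I_sq
  · refine lintegral_conformal_length_eq_top (R := 1) hγ hdiv one_half_pos
      (fun w hw => (hfactor w).trans' ?_) 0
    nlinarith
end

section
/- Let ψ(z) = ((z²+1)/(2z²), (i·cos t·(1 - z²) - 2iz·sin t)/(2z²), (2z·cos t + sin t·(1 - z²))/(2z²)) on ℂ \ {0}. Then the period ∮_γ ψ dz along the unit circle γ has real part (0, 2π·sin t, 0); in particular the real period vanishes if and only if sin t = 0. -/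
/-!
Each component of `ψ` is a Laurent polynomial `a + b/z + c/z²`, and on a circle around `0` only
the term `b/z` has a nonzero integral, namely `2πi·b`. The residues of the three components are
`0`, `-i sin t` and `cos t`, so the periods are `0`, `2π sin t` and the purely imaginary
`2πi cos t`.
-/

open Complex Metric

theorem circleIntegral_quadratic_div_sub_sq (a b d c : ℂ) {R : ℝ} (hR : 0 < R) :
    (∮ z in C(c, R), (a * (z - c) ^ 2 + b * (z - c) + d) / (z - c) ^ 2) =
      2 * Real.pi * I * b := by
  have hc : c ∉ sphere c R := by simp [hR.ne]
  have h_laurent : Set.EqOn (fun z => (a * (z - c) ^ 2 + b * (z - c) + d) / (z - c) ^ 2)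
      (fun z => a * (z - c) ^ (0 : ℤ) + (b * (z - c)⁻¹ + d * (z - c) ^ (-2 : ℤ)))
      (sphere c R) := by
    intro z hz
    have hzc : z - c ≠ 0 := sub_ne_zero.2 (ne_of_mem_of_not_mem hz hc)
    simp only [zpow_zero, zpow_neg, zpow_two]
    field_simp
    ring
  have h_int : ∀ n : ℤ, CircleIntegrable (fun z => (z - c) ^ n) c R := fun n =>
    circleIntegrable_sub_zpow_iff.2 (Or.inr (Or.inr (by rwa [abs_of_pos hR])))
  have h_inv : CircleIntegrable (fun z => (z - c)⁻¹) c R := by simpa using h_int (-1)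
  have h_const : CircleIntegrable (fun z => a * (z - c) ^ (0 : ℤ)) c R :=
    (h_int 0).const_fun_smul
  have h_pole : CircleIntegrable (fun z => b * (z - c)⁻¹) c R := h_inv.const_fun_smul
  have h_double_pole : CircleIntegrable (fun z => d * (z - c) ^ (-2 : ℤ)) c R :=
    (h_int (-2)).const_fun_smul
  rw [circleIntegral.integral_congr hR.le h_laurent,
    circleIntegral.integral_add h_const (h_pole.fun_add h_double_pole),
    circleIntegral.integral_add h_pole h_double_pole]
  simp only [circleIntegral.integral_const_mul, circleIntegral.integral_sub_center_inv c hR.ne',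
    circleIntegral.integral_sub_zpow_of_ne (by decide : (0 : ℤ) ≠ -1),
    circleIntegral.integral_sub_zpow_of_ne (by decide : (-2 : ℤ) ≠ -1)]
  ring

/-- The isotropic curve of the dual surface `C_t^♭` of the tilted Euclidean
catenoid has period along the unit circle with real part `(0, 2π·sin t, 0)`;
in particular, the real period vanishes iff `sin t = 0`. -/
theorem dual_tilted_catenoid_periods (t : ℝ) :
    ((∮ z in C(0, 1), (z ^ 2 + 1) / (2 * z ^ 2)).re = 0 ∧
     (∮ z in C(0, 1),
        (I * (Real.cos t : ℂ) * (1 - z ^ 2) - 2 * I * z * (Real.sin t : ℂ))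
          / (2 * z ^ 2)).re = 2 * Real.pi * Real.sin t ∧
     (∮ z in C(0, 1),
        (2 * z * (Real.cos t : ℂ) + (Real.sin t : ℂ) * (1 - z ^ 2))
          / (2 * z ^ 2)).re = 0) ∧
    (((∮ z in C(0, 1), (z ^ 2 + 1) / (2 * z ^ 2)).re = 0 ∧
      (∮ z in C(0, 1),
        (I * (Real.cos t : ℂ) * (1 - z ^ 2) - 2 * I * z * (Real.sin t : ℂ))
          / (2 * z ^ 2)).re = 0 ∧
      (∮ z in C(0, 1),
        (2 * z * (Real.cos t : ℂ) + (Real.sin t : ℂ) * (1 - z ^ 2))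
          / (2 * z ^ 2)).re = 0) ↔ Real.sin t = 0) := by
  have h₁ : (∮ z in C(0, 1), (z ^ 2 + 1) / (2 * z ^ 2)) = 2 * Real.pi * I * 0 := by
    rw [← circleIntegral_quadratic_div_sub_sq (1 / 2) 0 (1 / 2) 0 one_pos]
    exact circleIntegral.integral_congr zero_le_one fun z _ => by ring
  have h₂ : (∮ z in C(0, 1),
      (I * (Real.cos t : ℂ) * (1 - z ^ 2) - 2 * I * z * (Real.sin t : ℂ)) / (2 * z ^ 2)) =
        2 * Real.pi * I * (-I * Real.sin t) := by
    rw [← circleIntegral_quadratic_div_sub_sq (-I * Real.cos t / 2) (-I * Real.sin t)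
      (I * Real.cos t / 2) 0 one_pos]
    exact circleIntegral.integral_congr zero_le_one fun z _ => by ring
  have h₃ : (∮ z in C(0, 1),
      (2 * z * (Real.cos t : ℂ) + (Real.sin t : ℂ) * (1 - z ^ 2)) / (2 * z ^ 2)) =
        2 * Real.pi * I * Real.cos t := by
    rw [← circleIntegral_quadratic_div_sub_sq (-Real.sin t / 2) (Real.cos t)
      (Real.sin t / 2) 0 one_pos]
    exact circleIntegral.integral_congr zero_le_one fun z _ => by ring
  rw [h₁, h₂, h₃]
  -- keep `↑(Real.sin t)` as a cast, so that `ofReal_re` reads off its real part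
  simp [-ofReal_sin, -ofReal_cos, Real.pi_ne_zero]
end

section
/- Let g(z) = -i·((t+2i)e^z - t)/(t·e^z + 2i - t) with t ∈ ℝ, t ≠ 0, and let T(z) = (az+b)/(cz+d) with a = 2 - it, c = t, b = μ - (i/2)(μ-2)t, d = (1/2)(μ-2)t + 2i, where μ = -2λ for λ > 0. Then T(e^z + λ) = g(z) for all z (where the denominators are nonzero). -/
open Complex

/-- The Gauss map of `P_t(C)^♯` is a Möbius transform of the Gauss map
`e^z + λ` of the Bonnet minimal surface `B(λ)`: with `a = 2 - it`, `c = t`,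
`b = μ - (i/2)(μ-2)t`, `d = (1/2)(μ-2)t + 2i` and `μ = -2λ`, one has
`T(e^z + λ) = g(z)` wherever the denominators do not vanish. -/
theorem gauss_map_moebius_of_bonnet (t lam : ℝ) (ht : t ≠ 0) (hlam : 0 < lam)
    (z : ℂ)
    (hden₁ : (t : ℂ) * (Complex.exp z + (lam : ℂ))
        + ((1 / 2) * (((-2 * lam : ℝ) : ℂ) - 2) * (t : ℂ) + 2 * I) ≠ 0)
    (hden₂ : (t : ℂ) * Complex.exp z + 2 * I - (t : ℂ) ≠ 0) :
    ((2 - I * (t : ℂ)) * (Complex.exp z + (lam : ℂ))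
        + (((-2 * lam : ℝ) : ℂ) - (I / 2) * (((-2 * lam : ℝ) : ℂ) - 2) * (t : ℂ)))
      / ((t : ℂ) * (Complex.exp z + (lam : ℂ))
        + ((1 / 2) * (((-2 * lam : ℝ) : ℂ) - 2) * (t : ℂ) + 2 * I))
    = -I * (((t : ℂ) + 2 * I) * Complex.exp z - (t : ℂ))
        / ((t : ℂ) * Complex.exp z + 2 * I - (t : ℂ)) := by
  rw [div_eq_div_iff hden₁ hden₂]
  push_cast
  linear_combination (4 * Complex.exp z * I - 2 * (t:ℂ) * Complex.exp z + 2 * (t:ℂ) * Complex.exp z ^ 2) * Complex.I_sq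
end
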